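/- For every natural number r ≥ 1, the polynomial (β² − 64)^{N_r} belongs to the ideal J_r of ℂ[α,β,γ], where N_r = Σ_{s=1}^{r} ⌈s/2⌉ and ⌈s/2⌉ denotes the least integer ≥ s/2. -/

import Mathlib

open MvPolynomial

/-- The triple (R¹_r, R²_r, R³_r) of polynomials in ℂ[α,β,γ] (α = X 0, β = X 1, γ = X 2). -/
noncomputable def Rr : ℕ → MvPolynomial (Fin 3) ℂ × MvPolynomial (Fin 3) ℂ × MvPolynomial (Fin 3) ℂ
  | 0 => (1, 0, 0)
  | (r + 1) =>
      (X 0 * (Rr r).1 + C ((r : ℂ) ^ 2) * (Rr r).2.1,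
       (X 1 + C ((-1 : ℂ) ^ (r + 1) * 8)) * (Rr r).1 + C ((2 * r : ℂ) / (r + 1)) * (Rr r).2.2,
       X 2 * (Rr r).1)

/-- The ideal J_r = (R¹_r, R²_r, R³_r) ⊆ ℂ[α,β,γ]. -/
noncomputable def Jr (r : ℕ) : Ideal (MvPolynomial (Fin 3) ℂ) :=
  Ideal.span {(Rr r).1, (Rr r).2.1, (Rr r).2.2}

/-! Put `τ_k = β + (-1)^k·8`, so that `τ_k·τ_{k+1} = β² - 64 = D`. Multiplying the recurrence for
`R²_{r+2}` by `τ_{r+1}` and substituting the one for `R²_{r+1}` gives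
`D·R¹_{r+1} ≡ c·γ·R³_r (mod J_{r+2})` for a constant `c`, where `R³_r = γ·R¹_{r-1}`. Since
`γ·J_r ⊆ J_{r+1}`, a two-step induction yields `D^⌈(r+1)/2⌉·R¹_r ∈ J_{r+1}`. The other two
recurrences express `R²_r` and `R³_r` through `R¹` (their coefficients `r²` and `2r/(r+1)` are
invertible for `r ≥ 1`), so in fact `D^⌈(r+1)/2⌉·J_r ⊆ J_{r+1}`, and chaining these inclusions
from `J_0 = (1)` gives `D^{N_r} ∈ J_r`. -/

theorem Ideal.mul_mem_of_mem_span {R : Type*} [CommSemiring R] {s : Set R} {I : Ideal R}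
    {m x : R} (hx : x ∈ Ideal.span s) (hs : ∀ a ∈ s, m * a ∈ I) : m * x ∈ I := by
  induction hx using Submodule.span_induction with
  | mem a ha => exact hs a ha
  | zero => simp
  | add a b _ _ ha hb => rw [mul_add]; exact add_mem ha hb
  | smul a b _ hb => rw [smul_eq_mul, mul_left_comm]; exact I.mul_mem_left a hb

theorem MvPolynomial.mem_of_C_mul_mem {σ k : Type*} [Field k] {I : Ideal (MvPolynomial σ k)}
    {a : k} {x : MvPolynomial σ k} (ha : a ≠ 0) (h : C a * x ∈ I) : x ∈ I :=
  (I.unit_mul_mem_iff_mem (ha.isUnit.map C)).mp h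

-- `P`, `Q`, `S` stand for `R¹`, `R²`, `R³`, and `R²_{r+1} = τ (r+1) * R¹_r + κ r * R³_r`.
local notation "P" r:max => Prod.fst (Rr r)
local notation "Q" r:max => Prod.fst (Prod.snd (Rr r))
local notation "S" r:max => Prod.snd (Prod.snd (Rr r))
local notation "τ" k:max => (X 1 : MvPolynomial (Fin 3) ℂ) + C ((-1 : ℂ) ^ k * 8)
local notation "κ" r:max => (2 * ((r : ℕ) : ℂ)) / (((r : ℕ) : ℂ) + 1)
local notation "D" => (X 1 : MvPolynomial (Fin 3) ℂ) ^ 2 - C 64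

theorem P_mem_Jr (r : ℕ) : P r ∈ Jr r := Ideal.subset_span (by simp)

theorem Q_mem_Jr (r : ℕ) : Q r ∈ Jr r := Ideal.subset_span (by simp)

theorem S_mem_Jr (r : ℕ) : S r ∈ Jr r := Ideal.subset_span (by simp)

theorem Jr_zero : Jr 0 = ⊤ :=
  Ideal.eq_top_of_isUnit_mem _ (P_mem_Jr 0) isUnit_one

theorem mul_mem_of_mem_Jr {r : ℕ} {I : Ideal (MvPolynomial (Fin 3) ℂ)}
    {m x : MvPolynomial (Fin 3) ℂ} (hx : x ∈ Jr r)
    (hP : m * P r ∈ I) (hQ : m * Q r ∈ I) (hS : m * S r ∈ I) : m * x ∈ I := by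
  refine Ideal.mul_mem_of_mem_span hx ?_
  simp only [Set.mem_insert_iff, Set.mem_singleton_iff]
  rintro a (rfl | rfl | rfl) <;> assumption

theorem S_succ (r : ℕ) : S (r + 1) = X 2 * P r := rfl

theorem C_sq_mul_Q (r : ℕ) : C ((r : ℂ) ^ 2) * Q r = P (r + 1) - X 0 * P r := by
  simp only [Rr]; ring

theorem C_κ_mul_S (r : ℕ) : C (κ r) * S r = Q (r + 1) - τ (r + 1) * P r := by
  simp only [Rr]; ring

theorem τ_mul_τ_succ (k : ℕ) : τ k * τ (k + 1) = D := by
  have h : (C ((-1 : ℂ) ^ k * 8) : MvPolynomial (Fin 3) ℂ) ^ 2 = C 64 := by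
    rw [← map_pow, mul_pow, ← pow_mul, mul_comm k, pow_mul]; norm_num
  rw [pow_succ, mul_neg_one, neg_mul, map_neg]
  linear_combination -h

theorem X_two_mul_mem_Jr_succ {r : ℕ} {x : MvPolynomial (Fin 3) ℂ} (hx : x ∈ Jr r) :
    X 2 * x ∈ Jr (r + 1) := by
  refine mul_mem_of_mem_Jr hx (S_mem_Jr (r + 1)) ?_ ?_
  · cases r with
    | zero => simp [Rr]
    | succ m =>
      refine mem_of_C_mul_mem (a := ((m + 1 : ℕ) : ℂ) ^ 2) (by norm_cast; simp) ?_
      have h : C (((m + 1 : ℕ) : ℂ) ^ 2) * (X 2 * Q (m + 1)) =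
          X 2 * P (m + 2) - X 0 * S (m + 2) := by
        rw [S_succ (m + 1)]; linear_combination X 2 * C_sq_mul_Q (m + 1)
      rw [h]
      exact sub_mem (Ideal.mul_mem_left _ _ (P_mem_Jr _)) (Ideal.mul_mem_left _ _ (S_mem_Jr _))
  · cases r with
    | zero => simp [Rr]
    | succ m =>
      refine mem_of_C_mul_mem (a := κ (m + 1)) (by simp; norm_cast) ?_
      have h : C (κ (m + 1)) * (X 2 * S (m + 1)) = X 2 * Q (m + 2) - τ (m + 2) * S (m + 2) := by
        rw [S_succ (m + 1)]; linear_combination X 2 * C_κ_mul_S (m + 1)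
      rw [h]
      exact sub_mem (Ideal.mul_mem_left _ _ (Q_mem_Jr _)) (Ideal.mul_mem_left _ _ (S_mem_Jr _))

theorem D_mul_P_succ (r : ℕ) :
    D * P (r + 1) = τ (r + 1) * Q (r + 2) - C (κ (r + 1)) * (X 2 * Q (r + 1))
      + C (κ (r + 1) * κ r) * (X 2 * S r) := by
  have hQ₂ : Q (r + 2) = τ (r + 2) * P (r + 1) + C (κ (r + 1)) * (X 2 * P r) := rfl
  have hQ₁ : Q (r + 1) = τ (r + 1) * P r + C (κ r) * S r := rfl
  rw [hQ₂, hQ₁, map_mul C (κ (r + 1)) (κ r)]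
  linear_combination (-P (r + 1)) * τ_mul_τ_succ (r + 1)

theorem D_mul_P_succ_sub_mem_Jr (r : ℕ) :
    D * P (r + 1) - C (κ (r + 1) * κ r) * (X 2 * S r) ∈ Jr (r + 2) := by
  rw [D_mul_P_succ, add_sub_cancel_right]
  exact sub_mem (Ideal.mul_mem_left _ _ (Q_mem_Jr _))
    (Ideal.mul_mem_left _ _ (X_two_mul_mem_Jr_succ (Q_mem_Jr _)))

theorem D_pow_mul_P_mem_Jr_succ (r : ℕ) : D ^ ((r + 2) / 2) * P r ∈ Jr (r + 1) := by
  induction r using Nat.twoStepInduction with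
  | zero =>
    have h : D ^ ((0 + 2) / 2) * P 0 = τ 0 * Q 1 := by
      simp only [Rr]; rw [← τ_mul_τ_succ 0]; simp
    exact h ▸ Ideal.mul_mem_left _ _ (Q_mem_Jr 1)
  | one => simpa [Rr] using D_mul_P_succ_sub_mem_Jr 0
  | more r ih _ =>
    set k := κ (r + 2) * κ (r + 1)
    have h : D ^ ((r + 2 + 2) / 2) * P (r + 2) =
        D ^ ((r + 2) / 2) * (D * P (r + 2) - C k * (X 2 * S (r + 1)))
          + C k * (X 2 * (X 2 * (D ^ ((r + 2) / 2) * P r))) := by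
      rw [S_succ, show (r + 2 + 2) / 2 = (r + 2) / 2 + 1 by omega, pow_succ]; ring
    rw [h]
    exact add_mem (Ideal.mul_mem_left _ _ (D_mul_P_succ_sub_mem_Jr (r + 1)))
      (Ideal.mul_mem_left _ _ (X_two_mul_mem_Jr_succ (X_two_mul_mem_Jr_succ ih)))

theorem D_pow_mul_mem_Jr_succ {r : ℕ} {x : MvPolynomial (Fin 3) ℂ} (hx : x ∈ Jr r) :
    D ^ ((r + 2) / 2) * x ∈ Jr (r + 1) := by
  refine mul_mem_of_mem_Jr hx (D_pow_mul_P_mem_Jr_succ r) ?_ ?_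
  · cases r with
    | zero => simp [Rr]
    | succ m =>
      refine mem_of_C_mul_mem (a := ((m + 1 : ℕ) : ℂ) ^ 2) (by norm_cast; simp) ?_
      have h : C (((m + 1 : ℕ) : ℂ) ^ 2) * (D ^ ((m + 3) / 2) * Q (m + 1)) =
          D ^ ((m + 3) / 2) * P (m + 2) - X 0 * (D ^ ((m + 3) / 2) * P (m + 1)) := by
        linear_combination D ^ ((m + 3) / 2) * C_sq_mul_Q (m + 1)
      rw [h]
      exact sub_mem (Ideal.mul_mem_left _ _ (P_mem_Jr _))
        (Ideal.mul_mem_left _ _ (D_pow_mul_P_mem_Jr_succ (m + 1)))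
  · cases r with
    | zero => simp [Rr]
    | succ m =>
      obtain ⟨k, hk⟩ : ∃ k, (m + 3) / 2 = (m + 2) / 2 + k := ⟨(m + 3) / 2 - (m + 2) / 2, by omega⟩
      have h : D ^ ((m + 3) / 2) * S (m + 1) = D ^ k * (X 2 * (D ^ ((m + 2) / 2) * P m)) := by
        rw [hk, S_succ]; ring
      rw [h]
      exact Ideal.mul_mem_left _ _ (X_two_mul_mem_Jr_succ (D_pow_mul_P_mem_Jr_succ m))

theorem stmt18_general (r : ℕ) :
    ((X 1 : MvPolynomial (Fin 3) ℂ) ^ 2 - C 64) ^ (∑ s ∈ Finset.Icc 1 r, (s + 1) / 2) ∈ Jr r := by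
  induction r with
  | zero => simp [Jr_zero]
  | succ r ih =>
    rw [Finset.sum_Icc_succ_top (by omega), pow_add, mul_comm]
    exact D_pow_mul_mem_Jr_succ ih

/-- For every r ≥ 1, the polynomial (β² − 64)^{N_r} belongs to the ideal J_r of ℂ[α,β,γ],
where N_r = Σ_{s=1}^{r} ⌈s/2⌉ (and ⌈s/2⌉ = (s+1)/2 in natural-number division). -/
theorem stmt18 (r : ℕ) (hr : 1 ≤ r) :
    ((X 1 : MvPolynomial (Fin 3) ℂ) ^ 2 - C 64) ^ (∑ s ∈ Finset.Icc 1 r, (s + 1) / 2) ∈ Jr r :=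
  stmt18_general r
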